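/- arXiv:1707.04740 — 9 statements merged into one kernel-verified Lean document; each statement's English description precedes it below -/
import Mathlib

section
/- Under hyper-generalized recurrence with recurrence 1-forms A and B, the contracted derivative of the curvature satisfies, for all U, X, Z ∈ V: (∇_U Ric)(X,Z) = (A(U) + (n−2)B(U))·Ric(X,Z) + r·B(U)·g(X,Z). In particular, if r ≠ 0 then, setting A₁ := A + (n−2)B and B₁ := r·B, the 1-form B₁ is nonzero and ∇_U Ric = A₁(U)·Ric + B₁(U)·g, i.e. the space is generalized Ricci recurrent. (Theorem 2.2(a).) -/
/-! Contracting the recurrence in its second and fourth slots turns `∇_U R` into `∇_U Ric`,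
`R` into `Ric`, and `g ∧ Ric` into `r g + (n - 2) Ric`.
For the latter, `g` must expand vectors in both frames: as `g(eᵢ, eʲ) = δᵢʲ` and each frame has
`dim V` vectors, `(eʲ)` is a basis too, with coordinate functionals `g(eᵢ, -)`. -/

open scoped BigOperators

/-- Kulkarni–Nomizu product of two bilinear forms (as real-valued functions). -/
def KN {V : Type*} (h k : V → V → ℝ) (X Y Z W : V) : ℝ :=
  h X Z * k Y W + h Y W * k X Z - h X W * k Y Z - h Y Z * k X W

/-- The tensor `G(X,Y,Z,W) = g(X,Z)g(Y,W) - g(Y,Z)g(X,W)`. -/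
def Gten {V : Type*} (g : V → V → ℝ) (X Y Z W : V) : ℝ :=
  g X Z * g Y W - g Y Z * g X W

/-- Derivation action of the curvature endomorphism `Rend U V` on a quadrilinear form `T`. -/
def derAct {V : Type*} (Rend : V → V → V → V) (T : V → V → V → V → ℝ)
    (U V' X Y Z W : V) : ℝ :=
  - T (Rend U V' X) Y Z W - T X (Rend U V' Y) Z W
    - T X Y (Rend U V' Z) W - T X Y Z (Rend U V' W)

theorem Module.sum_dual_apply_smul_eq_self {K V ι : Type*} [Field K] [AddCommGroup V]
    [Module K V] [FiniteDimensional K V] [Fintype ι] [DecidableEq ι]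
    (hcard : Module.finrank K V = Fintype.card ι) (φ : ι → Module.Dual K V) (v : ι → V)
    (hφv : ∀ i j, φ i (v j) = if i = j then 1 else 0) (Z : V) :
    ∑ i, φ i Z • v i = Z := by
  have hcoord : ∀ c : ι → K, (fun i => φ i (∑ j, c j • v j)) = c := by
    intro c
    funext i
    simp [map_sum, hφv]
  have hinj : Function.Injective (Fintype.linearCombination K v) := by
    intro c c' h
    rw [← hcoord c, ← hcoord c']
    simp only [Fintype.linearCombination_apply] at h
    rw [h]
  obtain ⟨c, rfl⟩ := (LinearMap.injective_iff_surjective_of_finrank_eq_finrank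
    (by simp [hcard])).mp hinj Z
  simp only [Fintype.linearCombination_apply]
  exact Finset.sum_congr rfl fun i _ => by rw [congrFun (hcoord c) i]

def ricciContraction {K V ι : Type*} [CommSemiring K] [AddCommMonoid V] [Module K V]
    [Fintype ι] (R : V →ₗ[K] V →ₗ[K] V →ₗ[K] V →ₗ[K] K) (b b' : ι → V) :
    V →ₗ[K] V →ₗ[K] K :=
  ∑ i, (R.flip (b i)).compr₂ (LinearMap.applyₗ (b' i))

@[simp]
theorem ricciContraction_apply {K V ι : Type*} [CommSemiring K] [AddCommMonoid V] [Module K V]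
    [Fintype ι] (R : V →ₗ[K] V →ₗ[K] V →ₗ[K] V →ₗ[K] K) (b b' : ι → V) (X Z : V) :
    ricciContraction R b b' X Z = ∑ i, R X (b i) Z (b' i) := by
  simp [ricciContraction, LinearMap.sum_apply]

section DualFrames

variable {V ι : Type*} [AddCommGroup V] [Module ℝ V] [Fintype ι] [DecidableEq ι]
  {b : Module.Basis ι ℝ V} {e' : ι → V} {g : V →ₗ[ℝ] V →ₗ[ℝ] ℝ}

theorem sum_pairing_basis_smul_dual (hdual : ∀ i j, g (b i) (e' j) = if i = j then 1 else 0)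
    (Z : V) : ∑ i, g (b i) Z • e' i = Z :=
  haveI := Module.Finite.of_basis b
  Module.sum_dual_apply_smul_eq_self (by simp [Module.finrank_eq_card_basis b])
    (fun i => g (b i)) e' hdual Z

theorem sum_pairing_dual_smul_basis (hdual : ∀ i j, g (b i) (e' j) = if i = j then 1 else 0)
    (X : V) : ∑ i, g X (e' i) • b i = X :=
  haveI := Module.Finite.of_basis b
  Module.sum_dual_apply_smul_eq_self (by simp [Module.finrank_eq_card_basis b])
    (fun i => g.flip (e' i)) b (fun i j => by simp [hdual, eq_comm]) X

theorem sum_KN_contraction (hdual : ∀ i j, g (b i) (e' j) = if i = j then 1 else 0)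
    (L : V →ₗ[ℝ] V →ₗ[ℝ] ℝ) (X Z : V) :
    ∑ i, KN (fun a c => g a c) (fun a c => L a c) X (b i) Z (e' i)
      = g X Z * ∑ i, L (b i) (e' i) + ((Fintype.card ι : ℝ) - 2) * L X Z := by
  have htrace : ∑ i, g (b i) (e' i) = Fintype.card ι := by simp [hdual]
  have hleft : ∑ i, g X (e' i) * L (b i) Z = L X Z := by
    conv_rhs => rw [← sum_pairing_dual_smul_basis hdual X]
    simp [map_sum, LinearMap.sum_apply]
  have hright : ∑ i, g (b i) Z * L X (e' i) = L X Z := by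
    conv_rhs => rw [← sum_pairing_basis_smul_dual hdual Z]
    simp [map_sum]
  simp only [KN, Finset.sum_add_distrib, Finset.sum_sub_distrib, ← Finset.mul_sum,
    ← Finset.sum_mul, htrace, hleft, hright]
  ring

end DualFrames

theorem hgr_generalized_ricci_recurrent_general {V : Type*} [AddCommGroup V] [Module ℝ V]
    (n : ℕ)
    (b : Module.Basis (Fin n) ℝ V) (e' : Fin n → V)
    (g : V →ₗ[ℝ] V →ₗ[ℝ] ℝ)
    (hdual : ∀ i j, g (b i) (e' j) = if i = j then (1 : ℝ) else 0)
    (R : V →ₗ[ℝ] V →ₗ[ℝ] V →ₗ[ℝ] V →ₗ[ℝ] ℝ)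
    (Ric : V → V → ℝ)
    (hRic : ∀ X Z, Ric X Z = ∑ i, R X (b i) Z (e' i))
    (r : ℝ) (hr : r = ∑ i, Ric (b i) (e' i))
    (D : V →ₗ[ℝ] V →ₗ[ℝ] V →ₗ[ℝ] V →ₗ[ℝ] V →ₗ[ℝ] ℝ)
    (A B : V →ₗ[ℝ] ℝ) (hB : B ≠ 0)
    (hHGR : ∀ U X Y Z W,
      D U X Y Z W = A U * R X Y Z W + B U * KN (fun a c => g a c) Ric X Y Z W)
    (DRic : V → V → V → ℝ)
    (hDRicDef : ∀ U X Z, DRic U X Z = ∑ i, D U X (b i) Z (e' i))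
    :
    (∀ U X Z, DRic U X Z
        = (A U + ((n : ℝ) - 2) * B U) * Ric X Z + r * B U * g X Z) ∧
    (r ≠ 0 →
      r • B ≠ (0 : V →ₗ[ℝ] ℝ) ∧
      ∀ U X Z, DRic U X Z
        = (A + ((n : ℝ) - 2) • B) U * Ric X Z + (r • B) U * g X Z) := by
  have hRic_eq : Ric = fun X Z => ricciContraction R b e' X Z := by
    funext X Z
    simp [hRic]
  have hcontracted : ∀ U X Z, DRic U X Z
      = (A U + ((n : ℝ) - 2) * B U) * Ric X Z + r * B U * g X Z := by
    intro U X Z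
    simp only [hDRicDef, hHGR, Finset.sum_add_distrib, ← Finset.mul_sum, ← hRic]
    rw [hr, hRic_eq, sum_KN_contraction hdual, Fintype.card_fin]
    ring
  refine ⟨hcontracted, fun hr0 => ⟨smul_ne_zero hr0 hB, fun U X Z => ?_⟩⟩
  rw [hcontracted]
  simp only [LinearMap.add_apply, LinearMap.smul_apply, smul_eq_mul]

theorem hgr_generalized_ricci_recurrent {V : Type*} [AddCommGroup V] [Module ℝ V]
    (n : ℕ) (hn : 3 ≤ n)
    (b : Module.Basis (Fin n) ℝ V) (e' : Fin n → V)
    (g : V →ₗ[ℝ] V →ₗ[ℝ] ℝ)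
    (hg_symm : ∀ X Y, g X Y = g Y X)
    (hg_nd : ∀ X, (∀ Y, g X Y = 0) → X = 0)
    (hdual : ∀ i j, g (b i) (e' j) = if i = j then (1 : ℝ) else 0)
    (R : V →ₗ[ℝ] V →ₗ[ℝ] V →ₗ[ℝ] V →ₗ[ℝ] ℝ)
    (hR_ne : R ≠ 0)
    (hR_anti : ∀ X Y Z W, R X Y Z W = - R Y X Z W)
    (hR_pair : ∀ X Y Z W, R X Y Z W = R Z W X Y)
    (Ric : V → V → ℝ)
    (hRic : ∀ X Z, Ric X Z = ∑ i, R X (b i) Z (e' i))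
    (r : ℝ) (hr : r = ∑ i, Ric (b i) (e' i))
    (D : V →ₗ[ℝ] V →ₗ[ℝ] V →ₗ[ℝ] V →ₗ[ℝ] V →ₗ[ℝ] ℝ)
    (hBianchi : ∀ X Y Z W U, D X Y Z W U + D Y Z X W U + D Z X Y W U = 0)
    (A B : V →ₗ[ℝ] ℝ) (hA : A ≠ 0) (hB : B ≠ 0)
    (hHGR : ∀ U X Y Z W,
      D U X Y Z W = A U * R X Y Z W + B U * KN (fun a c => g a c) Ric X Y Z W)
    (DRic : V → V → V → ℝ)
    (hDRicDef : ∀ U X Z, DRic U X Z = ∑ i, D U X (b i) Z (e' i))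
    :
    (∀ U X Z, DRic U X Z
        = (A U + ((n : ℝ) - 2) * B U) * Ric X Z + r * B U * g X Z) ∧
    (r ≠ 0 →
      r • B ≠ (0 : V →ₗ[ℝ] ℝ) ∧
      ∀ U X Z, DRic U X Z
        = (A + ((n : ℝ) - 2) • B) U * Ric X Z + (r • B) U * g X Z) :=
  hgr_generalized_ricci_recurrent_general n b e' g hdual R Ric hRic r hr D A B hB hHGR DRic hDRicDef
end

section
/- Under hyper-generalized recurrence with recurrence 1-forms A and B, the relation (A + (n−2)B)(Ric₀ Z) = (r/2)·(A(Z) + 2(n−2)·B(Z)) holds for all Z ∈ V. (Theorem 2.2(c).) -/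
open scoped BigOperators

/-!
Contract the second Bianchi identity over the pairs of slots `(1,5)` and `(2,4)`. For a tensor `T`
antisymmetric in both pairs, with `Ric_T(Y,W) = Σ T(Y,eᵢ,W,eⁱ)` and `r_T = Σ Ric_T(eᵢ,eⁱ)`, the
contraction of `φ(X) T(Y,Z,W,U) + cyclic` is `2 Σ φ(eᵢ) Ric_T(Z,eⁱ) - φ(Z) r_T`. Recurrence writes
`∇R` as such a sum with `(φ, T) = (A, R)` and `(B, g ∧ Ric)`, and `Ric_{g∧Ric} = (n-2) Ric + r g`,
`r_{g∧Ric} = 2(n-1) r`, so the contracted identity reads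
`2 A(Ric₀ Z) - r A(Z) + 2(n-2) B(Ric₀ Z) + 2r B(Z) - 2(n-1) r B(Z) = 0`.
-/

open Finset

section DualBasis

variable {K V ι : Type*} [CommRing K] [AddCommGroup V] [Module K V] [Fintype ι] [DecidableEq ι]
  {b : Module.Basis ι K V} {e' : ι → V} {g : V →ₗ[K] V →ₗ[K] K}

theorem repr_apply_eq_of_dual (hdual : ∀ i j, g (b i) (e' j) = if i = j then 1 else 0)
    (X : V) (i : ι) : b.repr X i = g X (e' i) := by
  conv_rhs => rw [← b.sum_repr X]
  simp only [map_sum, map_smul, LinearMap.sum_apply, LinearMap.smul_apply, hdual, smul_eq_mul]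
  simp

theorem sum_mul_apply_dual (hdual : ∀ i j, g (b i) (e' j) = if i = j then 1 else 0)
    (φ : V →ₗ[K] K) (X : V) : ∑ i, φ (b i) * g X (e' i) = φ X := by
  conv_rhs => rw [← b.sum_repr X]
  simp [repr_apply_eq_of_dual hdual, mul_comm]

theorem sum_apply_dual_self (hdual : ∀ i j, g (b i) (e' j) = if i = j then 1 else 0) :
    ∑ i, g (b i) (e' i) = Fintype.card ι := by
  simp [hdual]

end DualBasis

section Contraction

variable {V ι : Type*} [Fintype ι] {b e' : ι → V}

theorem KN_antisymm_left (h k : V → V → ℝ) (X Y Z W : V) :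
    KN h k X Y Z W = - KN h k Y X Z W := by
  unfold KN; ring

theorem KN_antisymm_right (h k : V → V → ℝ) (X Y Z W : V) :
    KN h k X Y Z W = - KN h k X Y W Z := by
  unfold KN; ring

theorem antisymm_right_of_antisymm_left_of_swap_pairs {T : V → V → V → V → ℝ}
    (hT_anti : ∀ X Y Z W, T X Y Z W = - T Y X Z W) (hT_pair : ∀ X Y Z W, T X Y Z W = T Z W X Y)
    (X Y Z W : V) : T X Y Z W = - T X Y W Z := by
  rw [hT_pair, hT_anti, hT_pair W Z]

theorem sum_sum_cyclic_contraction {T : V → V → V → V → ℝ}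
    (hT₁ : ∀ X Y Z W, T X Y Z W = - T Y X Z W) (hT₂ : ∀ X Y Z W, T X Y Z W = - T X Y W Z)
    (φ : V → ℝ) (Z : V) :
    ∑ i, ∑ j, (φ (b i) * T (b j) Z (e' j) (e' i) + φ (b j) * T Z (b i) (e' j) (e' i)
        + φ Z * T (b i) (b j) (e' j) (e' i))
      = 2 * ∑ i, φ (b i) * ∑ j, T Z (b j) (e' i) (e' j)
        - φ Z * ∑ i, ∑ j, T (b i) (b j) (e' i) (e' j) := by
  have h₁ : ∀ i j, T (b j) Z (e' j) (e' i) = T Z (b j) (e' i) (e' j) := fun i j => by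
    rw [hT₁, hT₂, neg_neg]
  have h₃ : ∀ i j, T (b i) (b j) (e' j) (e' i) = - T (b i) (b j) (e' i) (e' j) :=
    fun i j => hT₂ _ _ _ _
  simp only [sum_add_distrib, h₁, h₃, mul_neg, sum_neg_distrib, ← mul_sum]
  rw [sum_comm (f := fun i j => φ (b j) * T Z (b i) (e' j) (e' i))]
  simp only [← mul_sum]
  ring

theorem contracted_bianchi {D : V → V → V → V → V → ℝ}
    (hBianchi : ∀ X Y Z W U, D X Y Z W U + D Y Z X W U + D Z X Y W U = 0)
    {φ ψ : V → ℝ} {T S : V → V → V → V → ℝ}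
    (hD : ∀ U X Y Z W, D U X Y Z W = φ U * T X Y Z W + ψ U * S X Y Z W)
    (hT₁ : ∀ X Y Z W, T X Y Z W = - T Y X Z W) (hT₂ : ∀ X Y Z W, T X Y Z W = - T X Y W Z)
    (hS₁ : ∀ X Y Z W, S X Y Z W = - S Y X Z W) (hS₂ : ∀ X Y Z W, S X Y Z W = - S X Y W Z)
    (Z : V) :
    (2 * ∑ i, φ (b i) * ∑ j, T Z (b j) (e' i) (e' j)
        - φ Z * ∑ i, ∑ j, T (b i) (b j) (e' i) (e' j))
      + (2 * ∑ i, ψ (b i) * ∑ j, S Z (b j) (e' i) (e' j)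
        - ψ Z * ∑ i, ∑ j, S (b i) (b j) (e' i) (e' j)) = 0 := by
  rw [← sum_sum_cyclic_contraction hT₁ hT₂, ← sum_sum_cyclic_contraction hS₁ hS₂,
    ← sum_add_distrib]
  refine sum_eq_zero fun i _ => ?_
  rw [← sum_add_distrib]
  refine sum_eq_zero fun j _ => ?_
  have h := hBianchi (b i) (b j) Z (e' j) (e' i)
  simp only [hD] at h
  linear_combination h

end Contraction

section KulkarniNomizu

variable {V ι : Type*} [AddCommGroup V] [Module ℝ V] [Fintype ι] [DecidableEq ι]
  {b : Module.Basis ι ℝ V} {e' : ι → V} {g : V →ₗ[ℝ] V →ₗ[ℝ] ℝ}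

theorem sum_KN_apply_dual (hdual : ∀ i j, g (b i) (e' j) = if i = j then 1 else 0)
    (L : V →ₗ[ℝ] V) (Y : V) (l : ι) :
    ∑ i, KN (fun a c => g a c) (fun a c => g (L a) c) Y (b i) (e' l) (e' i)
      = (Fintype.card ι - 2) * g (L Y) (e' l) + (∑ i, g (L (b i)) (e' i)) * g Y (e' l) := by
  have hL : ∑ i, g Y (e' i) * g (L (b i)) (e' l) = g (L Y) (e' l) := by
    simpa [mul_comm] using sum_mul_apply_dual hdual (g.flip (e' l) ∘ₗ L) Y
  have hg : ∑ i, g (b i) (e' l) * g (L Y) (e' i) = g (L Y) (e' l) := by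
    simp [hdual]
  simp only [KN, sum_sub_distrib, sum_add_distrib, ← mul_sum, ← sum_mul, hL, hg,
    sum_apply_dual_self hdual]
  ring

theorem sum_sum_KN_apply_dual (hdual : ∀ i j, g (b i) (e' j) = if i = j then 1 else 0)
    (L : V →ₗ[ℝ] V) :
    ∑ i, ∑ j, KN (fun a c => g a c) (fun a c => g (L a) c) (b i) (b j) (e' i) (e' j)
      = 2 * (Fintype.card ι - 1) * ∑ i, g (L (b i)) (e' i) := by
  simp only [sum_KN_apply_dual hdual, sum_add_distrib, ← mul_sum, sum_apply_dual_self hdual]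
  ring

end KulkarniNomizu

theorem hgr_ricci_operator_relation_general {V : Type*} [AddCommGroup V] [Module ℝ V]
    (n : ℕ)
    (b : Module.Basis (Fin n) ℝ V) (e' : Fin n → V)
    (g : V →ₗ[ℝ] V →ₗ[ℝ] ℝ)
    (hdual : ∀ i j, g (b i) (e' j) = if i = j then (1 : ℝ) else 0)
    (R : V →ₗ[ℝ] V →ₗ[ℝ] V →ₗ[ℝ] V →ₗ[ℝ] ℝ)
    (hR_anti : ∀ X Y Z W, R X Y Z W = - R Y X Z W)
    (hR_pair : ∀ X Y Z W, R X Y Z W = R Z W X Y)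
    (Ric : V → V → ℝ)
    (hRic : ∀ X Z, Ric X Z = ∑ i, R X (b i) Z (e' i))
    (r : ℝ) (hr : r = ∑ i, Ric (b i) (e' i))
    (Ric₀ : V →ₗ[ℝ] V)
    (hRic₀ : ∀ X Y, g (Ric₀ X) Y = Ric X Y)
    (D : V →ₗ[ℝ] V →ₗ[ℝ] V →ₗ[ℝ] V →ₗ[ℝ] V →ₗ[ℝ] ℝ)
    (hBianchi : ∀ X Y Z W U, D X Y Z W U + D Y Z X W U + D Z X Y W U = 0)
    (A B : V →ₗ[ℝ] ℝ)
    (hHGR : ∀ U X Y Z W,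
      D U X Y Z W = A U * R X Y Z W + B U * KN (fun a c => g a c) Ric X Y Z W)
    :
    ∀ Z, A (Ric₀ Z) + ((n : ℝ) - 2) * B (Ric₀ Z)
      = r / 2 * (A Z + 2 * ((n : ℝ) - 2) * B Z) := by
  intro Z
  have hRic_eq : Ric = fun X Y => g (Ric₀ X) Y := funext₂ fun X Y => (hRic₀ X Y).symm
  have hr₀ : r = ∑ i, g (Ric₀ (b i)) (e' i) := by simp only [hr, hRic₀]
  have key := contracted_bianchi (b := b) (e' := e') (D := fun U X Y Z W => D U X Y Z W)
    (T := fun X Y Z W => R X Y Z W) hBianchi hHGR hR_anti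
    (antisymm_right_of_antisymm_left_of_swap_pairs hR_anti hR_pair)
    (KN_antisymm_left _ _) (KN_antisymm_right _ _) Z
  simp only [← hRic, hRic_eq, sum_sum_KN_apply_dual hdual, ← hr₀] at key
  simp only [sum_KN_apply_dual hdual, ← hr₀, mul_add, sum_add_distrib, mul_left_comm (B _),
    ← mul_sum, sum_mul_apply_dual hdual, Fintype.card_fin] at key
  linear_combination key / 2

theorem hgr_ricci_operator_relation {V : Type*} [AddCommGroup V] [Module ℝ V]
    (n : ℕ) (hn : 3 ≤ n)
    (b : Module.Basis (Fin n) ℝ V) (e' : Fin n → V)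
    (g : V →ₗ[ℝ] V →ₗ[ℝ] ℝ)
    (hg_symm : ∀ X Y, g X Y = g Y X)
    (hg_nd : ∀ X, (∀ Y, g X Y = 0) → X = 0)
    (hdual : ∀ i j, g (b i) (e' j) = if i = j then (1 : ℝ) else 0)
    (R : V →ₗ[ℝ] V →ₗ[ℝ] V →ₗ[ℝ] V →ₗ[ℝ] ℝ)
    (hR_ne : R ≠ 0)
    (hR_anti : ∀ X Y Z W, R X Y Z W = - R Y X Z W)
    (hR_pair : ∀ X Y Z W, R X Y Z W = R Z W X Y)
    (Ric : V → V → ℝ)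
    (hRic : ∀ X Z, Ric X Z = ∑ i, R X (b i) Z (e' i))
    (r : ℝ) (hr : r = ∑ i, Ric (b i) (e' i))
    (Ric₀ : V →ₗ[ℝ] V)
    (hRic₀ : ∀ X Y, g (Ric₀ X) Y = Ric X Y)
    (D : V →ₗ[ℝ] V →ₗ[ℝ] V →ₗ[ℝ] V →ₗ[ℝ] V →ₗ[ℝ] ℝ)
    (hBianchi : ∀ X Y Z W U, D X Y Z W U + D Y Z X W U + D Z X Y W U = 0)
    (A B : V →ₗ[ℝ] ℝ) (hA : A ≠ 0) (hB : B ≠ 0)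
    (hHGR : ∀ U X Y Z W,
      D U X Y Z W = A U * R X Y Z W + B U * KN (fun a c => g a c) Ric X Y Z W)
    (DRic : V → V → V → ℝ)
    (hDRicDef : ∀ U X Z, DRic U X Z = ∑ i, D U X (b i) Z (e' i))
    :
    ∀ Z, A (Ric₀ Z) + ((n : ℝ) - 2) * B (Ric₀ Z)
      = r / 2 * (A Z + 2 * ((n : ℝ) - 2) * B Z) :=
  hgr_ricci_operator_relation_general n b e' g hdual R hR_anti hR_pair Ric hRic r hr Ric₀ hRic₀ D
    hBianchi A B hHGR
end

section
/- Under hyper-generalized recurrence with recurrence 1-forms A and B, if r ≠ 0 and ∇_U r = 0 for all U ∈ V (i.e. r is a nonzero constant), then the recurrence forms are related by A + 2(n−1)·B = 0. (Theorem 2.3(a).) -/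
open scoped BigOperators

/-!
Contracting the recurrence relation `∇_U R = A(U) R + B(U) (g ∧ Ric)` twice against the dual
bases gives `∇_U r = (A(U) + 2(n-1) B(U)) r`, because the double trace of `g ∧ k` is
`2(n-1) tr k`. If `r` is a nonzero constant, the factor `A + 2(n-1) B` must vanish.
-/

open Finset

section KulkarniNomizuTrace

variable {V ι : Type*} [Fintype ι] [DecidableEq ι] {b e' : ι → V} {g : V → V → ℝ}

theorem sum_KN_of_dual (hdual : ∀ i j, g (b i) (e' j) = if i = j then (1 : ℝ) else 0)
    (k : V → V → ℝ) (j : ι) :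
    ∑ i, KN g k (b j) (b i) (e' j) (e' i)
      = ∑ i, k (b i) (e' i) + ((Fintype.card ι : ℝ) - 2) * k (b j) (e' j) := by
  simp only [KN, hdual, one_mul, ite_mul, zero_mul, sum_sub_distrib,
    sum_add_distrib, sum_ite_eq, sum_ite_eq', mem_univ, if_true, sum_const, card_univ,
    nsmul_eq_mul]
  ring

theorem sum_sum_KN_of_dual (hdual : ∀ i j, g (b i) (e' j) = if i = j then (1 : ℝ) else 0)
    (k : V → V → ℝ) :
    ∑ j, ∑ i, KN g k (b j) (b i) (e' j) (e' i)
      = 2 * ((Fintype.card ι : ℝ) - 1) * ∑ i, k (b i) (e' i) := by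
  simp only [sum_KN_of_dual hdual, sum_add_distrib, ← mul_sum, sum_const, card_univ, nsmul_eq_mul]
  ring

end KulkarniNomizuTrace

theorem hgr_constant_scalar_form_relation_general {V : Type*} [AddCommGroup V] [Module ℝ V]
    (n : ℕ)
    (b : Module.Basis (Fin n) ℝ V) (e' : Fin n → V)
    (g : V →ₗ[ℝ] V →ₗ[ℝ] ℝ)
    (hdual : ∀ i j, g (b i) (e' j) = if i = j then (1 : ℝ) else 0)
    (R : V →ₗ[ℝ] V →ₗ[ℝ] V →ₗ[ℝ] V →ₗ[ℝ] ℝ)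
    (Ric : V → V → ℝ)
    (hRic : ∀ X Z, Ric X Z = ∑ i, R X (b i) Z (e' i))
    (r : ℝ) (hr : r = ∑ i, Ric (b i) (e' i))
    (D : V →ₗ[ℝ] V →ₗ[ℝ] V →ₗ[ℝ] V →ₗ[ℝ] V →ₗ[ℝ] ℝ)
    (A B : V →ₗ[ℝ] ℝ)
    (hHGR : ∀ U X Y Z W,
      D U X Y Z W = A U * R X Y Z W + B U * KN (fun a c => g a c) Ric X Y Z W)
    (DRic : V → V → V → ℝ)
    (hDRicDef : ∀ U X Z, DRic U X Z = ∑ i, D U X (b i) Z (e' i))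
    (Dr : V → ℝ)
    (hDrDef : ∀ U, Dr U = ∑ i, DRic U (b i) (e' i))
    (hr_ne : r ≠ 0) (hr_const : ∀ U, Dr U = 0)
    :
    ∀ X, A X + 2 * ((n : ℝ) - 1) * B X = 0 := by
  intro X
  have hDr : Dr X = A X * r + B X * (2 * ((n : ℝ) - 1) * r) := by
    simp only [hDrDef, hDRicDef, hHGR, sum_add_distrib, ← mul_sum, ← hRic, ← hr,
      sum_sum_KN_of_dual (g := fun a c => g a c) hdual, Fintype.card_fin]
  have hfactor : (A X + 2 * ((n : ℝ) - 1) * B X) * r = 0 := by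
    rw [← hr_const X, hDr]
    ring
  exact (mul_eq_zero.mp hfactor).resolve_right hr_ne

theorem hgr_constant_scalar_form_relation {V : Type*} [AddCommGroup V] [Module ℝ V]
    (n : ℕ) (hn : 3 ≤ n)
    (b : Module.Basis (Fin n) ℝ V) (e' : Fin n → V)
    (g : V →ₗ[ℝ] V →ₗ[ℝ] ℝ)
    (hg_symm : ∀ X Y, g X Y = g Y X)
    (hg_nd : ∀ X, (∀ Y, g X Y = 0) → X = 0)
    (hdual : ∀ i j, g (b i) (e' j) = if i = j then (1 : ℝ) else 0)
    (R : V →ₗ[ℝ] V →ₗ[ℝ] V →ₗ[ℝ] V →ₗ[ℝ] ℝ)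
    (hR_ne : R ≠ 0)
    (hR_anti : ∀ X Y Z W, R X Y Z W = - R Y X Z W)
    (hR_pair : ∀ X Y Z W, R X Y Z W = R Z W X Y)
    (Ric : V → V → ℝ)
    (hRic : ∀ X Z, Ric X Z = ∑ i, R X (b i) Z (e' i))
    (r : ℝ) (hr : r = ∑ i, Ric (b i) (e' i))
    (D : V →ₗ[ℝ] V →ₗ[ℝ] V →ₗ[ℝ] V →ₗ[ℝ] V →ₗ[ℝ] ℝ)
    (hBianchi : ∀ X Y Z W U, D X Y Z W U + D Y Z X W U + D Z X Y W U = 0)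
    (A B : V →ₗ[ℝ] ℝ) (hA : A ≠ 0) (hB : B ≠ 0)
    (hHGR : ∀ U X Y Z W,
      D U X Y Z W = A U * R X Y Z W + B U * KN (fun a c => g a c) Ric X Y Z W)
    (DRic : V → V → V → ℝ)
    (hDRicDef : ∀ U X Z, DRic U X Z = ∑ i, D U X (b i) Z (e' i))
    (Dr : V → ℝ)
    (hDrDef : ∀ U, Dr U = ∑ i, DRic U (b i) (e' i))
    (hr_ne : r ≠ 0) (hr_const : ∀ U, Dr U = 0)
    :
    ∀ X, A X + 2 * ((n : ℝ) - 1) * B X = 0 :=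
  hgr_constant_scalar_form_relation_general n b e' g hdual R Ric hRic r hr D A B hHGR DRic hDRicDef
    Dr hDrDef hr_ne hr_const
end

section
/- Under hyper-generalized recurrence with recurrence 1-forms A and B, if r ≠ 0 and ∇_U r = 0 for all U ∈ V (i.e. r is a nonzero constant), then r/n is an eigenvalue of Ric₀, and the g-dual vectors σ and ρ of A and B are corresponding eigenvectors: Ric₀ σ = (r/n)·σ and Ric₀ ρ = (r/n)·ρ. (Theorem 2.3(b).) -/
open scoped BigOperators

/-!
Contracting the recurrence condition `∇R = A ⊗ R + B ⊗ (g ∧ Ric)` twice gives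
`∇r = r (A + 2(n-1) B)`, so a nonzero constant `r` forces `σ = -2(n-1) ρ`. The twice-contracted
second Bianchi identity `2 div Ric = dr = 0`, with `div Ric` computed from the recurrence condition,
reads `Ric(·, σ) + r g(·, ρ) + (n-2) Ric(·, ρ) = 0`; substituting `σ` leaves
`n Ric(·, ρ) = r g(·, ρ)`.
-/

open Finset

section DualBasis

variable {ι V : Type*} [Fintype ι] [DecidableEq ι] [AddCommGroup V] [Module ℝ V]
  {b : Module.Basis ι ℝ V} {e' : ι → V} {g : V →ₗ[ℝ] V →ₗ[ℝ] ℝ}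

def IsDualBasis (g : V →ₗ[ℝ] V →ₗ[ℝ] ℝ) (b : Module.Basis ι ℝ V) (e' : ι → V) : Prop :=
  ∀ i j, g (b i) (e' j) = if i = j then 1 else 0

lemma IsDualBasis.apply_eq_repr (hdual : IsDualBasis g b e') (X : V) (i : ι) :
    g X (e' i) = b.repr X i := by
  conv_lhs => rw [← b.sum_repr X, map_sum, LinearMap.sum_apply]
  simp [hdual _ _]

lemma IsDualBasis.separatingLeft (hdual : IsDualBasis g b e') : g.SeparatingLeft :=
  fun X hX => b.ext_elem fun i => by simp [← hdual.apply_eq_repr, hX]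

lemma IsDualBasis.sum_apply_mul (hdual : IsDualBasis g b e') (f : V →ₗ[ℝ] ℝ) (X : V) :
    ∑ i, g X (e' i) * f (b i) = f X := by
  conv_rhs => rw [← b.sum_repr X, map_sum]
  simp [hdual.apply_eq_repr]

lemma IsDualBasis.sum_smul (hdual : IsDualBasis g b e') (hsymm : ∀ X Y, g X Y = g Y X)
    {f : V →ₗ[ℝ] ℝ} {σ : V} (hσ : ∀ X, g σ X = f X) : ∑ i, f (b i) • e' i = σ :=
  eq_of_sub_eq_zero <| hdual.separatingLeft _ fun Y => by
    simp [hσ, hsymm _ Y, mul_comm (f _), hdual.sum_apply_mul]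

lemma IsDualBasis.sum_mul_apply (hdual : IsDualBasis g b e') (hsymm : ∀ X Y, g X Y = g Y X)
    {f : V →ₗ[ℝ] ℝ} {σ : V} (hσ : ∀ X, g σ X = f X) (T : V →ₗ[ℝ] ℝ) :
    ∑ i, f (b i) * T (e' i) = T σ := by
  simp [← hdual.sum_smul hsymm hσ]

lemma IsDualBasis.sum_apply_swap (hdual : IsDualBasis g b e') (hsymm : ∀ X Y, g X Y = g Y X)
    (T : V →ₗ[ℝ] V →ₗ[ℝ] ℝ) : ∑ i, T (e' i) (b i) = ∑ i, T (b i) (e' i) :=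
  calc ∑ i, T (e' i) (b i) = ∑ i, ∑ j, g (e' i) (e' j) * T (b j) (b i) :=
        sum_congr rfl fun i _ => (hdual.sum_apply_mul (T.flip (b i)) (e' i)).symm
    _ = ∑ j, ∑ i, g (e' j) (e' i) * T (b j) (b i) := by
        rw [sum_comm]
        exact sum_congr rfl fun j _ => sum_congr rfl fun i _ => by rw [hsymm]
    _ = ∑ j, T (b j) (e' j) := sum_congr rfl fun j _ => hdual.sum_apply_mul (T (b j)) (e' j)

lemma IsDualBasis.sum_apply_self (hdual : IsDualBasis g b e') :
    ∑ i, g (b i) (e' i) = Fintype.card ι := by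
  simp [hdual _ _]

end DualBasis

section KulkarniNomizu

variable {V : Type*}

lemma KN_anti_left (h k : V → V → ℝ) (X Y Z W : V) : KN h k X Y Z W = -KN h k Y X Z W := by
  unfold KN; ring

lemma KN_anti_right (h k : V → V → ℝ) (X Y Z W : V) : KN h k X Y Z W = -KN h k X Y W Z := by
  unfold KN; ring

variable {ι : Type*} [Fintype ι] [DecidableEq ι] [AddCommGroup V] [Module ℝ V]
  {b : Module.Basis ι ℝ V} {e' : ι → V} {g : V →ₗ[ℝ] V →ₗ[ℝ] ℝ}

lemma IsDualBasis.sum_KN (hdual : IsDualBasis g b e') (hsymm : ∀ X Y, g X Y = g Y X)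
    (S : V →ₗ[ℝ] V →ₗ[ℝ] ℝ) (X Z : V) :
    ∑ i, KN (fun a c => g a c) (fun a c => S a c) X (b i) Z (e' i)
      = (∑ i, S (b i) (e' i)) * g X Z + (Fintype.card ι - 2) * S X Z := by
  have h₁ : ∑ i, g X (e' i) * S (b i) Z = S X Z := hdual.sum_apply_mul (S.flip Z) X
  have h₂ : ∑ i, g (b i) Z * S X (e' i) = S X Z := by
    simp only [hsymm _ Z]
    exact hdual.sum_mul_apply hsymm (fun _ => rfl) (S X)
  simp only [KN, sum_sub_distrib, sum_add_distrib, ← mul_sum, ← sum_mul, h₁, h₂,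
    hdual.sum_apply_self]
  ring

end KulkarniNomizu

section Curvature

variable {ι V : Type*} [Fintype ι] [AddCommGroup V] [Module ℝ V]

noncomputable def ricci (R : V →ₗ[ℝ] V →ₗ[ℝ] V →ₗ[ℝ] V →ₗ[ℝ] ℝ) (b : Module.Basis ι ℝ V)
    (e' : ι → V) : V →ₗ[ℝ] V →ₗ[ℝ] ℝ :=
  LinearMap.mk₂ ℝ (fun X Z => ∑ i, R X (b i) Z (e' i))
    (by simp [sum_add_distrib]) (by simp [mul_sum]) (by simp [sum_add_distrib]) (by simp [mul_sum])

noncomputable def scalarCurvature (R : V →ₗ[ℝ] V →ₗ[ℝ] V →ₗ[ℝ] V →ₗ[ℝ] ℝ) (b : Module.Basis ι ℝ V)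
    (e' : ι → V) : ℝ :=
  ∑ i, ricci R b e' (b i) (e' i)

variable [DecidableEq ι] {b : Module.Basis ι ℝ V} {e' : ι → V} {g : V →ₗ[ℝ] V →ₗ[ℝ] ℝ}
  {R : V →ₗ[ℝ] V →ₗ[ℝ] V →ₗ[ℝ] V →ₗ[ℝ] ℝ}

lemma ricci_symm (hdual : IsDualBasis g b e') (hsymm : ∀ X Y, g X Y = g Y X)
    (hR_pair : ∀ X Y Z W, R X Y Z W = R Z W X Y) (X Z : V) :
    ricci R b e' X Z = ricci R b e' Z X :=
  calc ∑ i, R X (b i) Z (e' i) = ∑ i, R X (e' i) Z (b i) :=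
        (hdual.sum_apply_swap hsymm ((R X).flip Z)).symm
    _ = ∑ i, R Z (b i) X (e' i) := sum_congr rfl fun _ _ => hR_pair _ _ _ _

end Curvature

section Bianchi

variable {ι V : Type*} [Fintype ι] [AddCommGroup V] [Module ℝ V]

lemma two_mul_sum_sum_bianchi (b : ι → V) (e' : ι → V)
    {D : V →ₗ[ℝ] V →ₗ[ℝ] V →ₗ[ℝ] V →ₗ[ℝ] V →ₗ[ℝ] ℝ}
    (hBianchi : ∀ X Y Z W U, D X Y Z W U + D Y Z X W U + D Z X Y W U = 0)
    (hD_left : ∀ U X Y Z W, D U X Y Z W = -D U Y X Z W)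
    (hD_right : ∀ U X Y Z W, D U X Y Z W = -D U X Y W Z) (Y : V) :
    2 * ∑ j, ∑ i, D (b j) Y (b i) (e' j) (e' i) = ∑ i, ∑ j, D Y (b i) (b j) (e' i) (e' j) := by
  have hsum : ∑ j, ∑ i, (D (b j) Y (b i) (e' j) (e' i) + D Y (b i) (b j) (e' j) (e' i)
      + D (b i) (b j) Y (e' j) (e' i)) = 0 := by
    simp [hBianchi]
  have h₂ : ∑ j, ∑ i, D Y (b i) (b j) (e' j) (e' i)
      = -∑ i, ∑ j, D Y (b i) (b j) (e' i) (e' j) := by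
    simp only [← sum_neg_distrib]
    exact sum_congr rfl fun j _ => sum_congr rfl fun i _ => hD_left _ _ _ _ _
  have h₃ : ∑ j, ∑ i, D (b i) (b j) Y (e' j) (e' i) = ∑ j, ∑ i, D (b j) Y (b i) (e' j) (e' i) := by
    rw [sum_comm]
    exact sum_congr rfl fun i _ => sum_congr rfl fun j _ => by
      rw [hD_left (b i) (b j) Y, hD_right (b i) Y (b j), neg_neg]
  simp only [sum_add_distrib, h₂, h₃] at hsum
  linarith

end Bianchi

section HyperGeneralizedRecurrent

variable {ι V : Type*} [Fintype ι] [AddCommGroup V] [Module ℝ V]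

def IsHyperGeneralizedRecurrent (D : V →ₗ[ℝ] V →ₗ[ℝ] V →ₗ[ℝ] V →ₗ[ℝ] V →ₗ[ℝ] ℝ)
    (R : V →ₗ[ℝ] V →ₗ[ℝ] V →ₗ[ℝ] V →ₗ[ℝ] ℝ) (g : V →ₗ[ℝ] V →ₗ[ℝ] ℝ)
    (b : Module.Basis ι ℝ V) (e' : ι → V) (A B : V →ₗ[ℝ] ℝ) : Prop :=
  ∀ U X Y Z W, D U X Y Z W
    = A U * R X Y Z W + B U * KN (fun a c => g a c) (fun a c => ricci R b e' a c) X Y Z W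

variable {b : Module.Basis ι ℝ V} {e' : ι → V} {g : V →ₗ[ℝ] V →ₗ[ℝ] ℝ}
  {R : V →ₗ[ℝ] V →ₗ[ℝ] V →ₗ[ℝ] V →ₗ[ℝ] ℝ}
  {D : V →ₗ[ℝ] V →ₗ[ℝ] V →ₗ[ℝ] V →ₗ[ℝ] V →ₗ[ℝ] ℝ} {A B : V →ₗ[ℝ] ℝ} {σ ρ : V}

namespace IsHyperGeneralizedRecurrent

lemma anti_left (h : IsHyperGeneralizedRecurrent D R g b e' A B)
    (hR_anti : ∀ X Y Z W, R X Y Z W = -R Y X Z W) (U X Y Z W : V) :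
    D U X Y Z W = -D U Y X Z W := by
  rw [h, h, hR_anti, KN_anti_left]
  ring

lemma anti_right (h : IsHyperGeneralizedRecurrent D R g b e' A B)
    (hR_anti : ∀ X Y Z W, R X Y Z W = -R Y X Z W) (hR_pair : ∀ X Y Z W, R X Y Z W = R Z W X Y)
    (U X Y Z W : V) : D U X Y Z W = -D U X Y W Z := by
  rw [h, h, hR_pair X Y, hR_anti, hR_pair, KN_anti_right]
  ring

variable [DecidableEq ι]

lemma sum_contract (h : IsHyperGeneralizedRecurrent D R g b e' A B)
    (hdual : IsDualBasis g b e') (hsymm : ∀ X Y, g X Y = g Y X) (U X Z : V) :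
    ∑ i, D U X (b i) Z (e' i) = A U * ricci R b e' X Z
      + B U * (scalarCurvature R b e' * g X Z + (Fintype.card ι - 2) * ricci R b e' X Z) := by
  simp only [h U X, sum_add_distrib, ← mul_sum, hdual.sum_KN hsymm]
  rfl

lemma sum_sum_contract (h : IsHyperGeneralizedRecurrent D R g b e' A B)
    (hdual : IsDualBasis g b e') (hsymm : ∀ X Y, g X Y = g Y X) (U : V) :
    ∑ i, ∑ j, D U (b i) (b j) (e' i) (e' j)
      = scalarCurvature R b e' * (A U + 2 * (Fintype.card ι - 1) * B U) := by
  simp only [h.sum_contract hdual hsymm, sum_add_distrib, ← mul_sum, hdual.sum_apply_self]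
  unfold scalarCurvature
  ring

lemma sum_sum_contract_left (h : IsHyperGeneralizedRecurrent D R g b e' A B)
    (hdual : IsDualBasis g b e') (hsymm : ∀ X Y, g X Y = g Y X)
    (hσ : ∀ X, g σ X = A X) (hρ : ∀ X, g ρ X = B X) (Y : V) :
    ∑ j, ∑ i, D (b j) Y (b i) (e' j) (e' i) = ricci R b e' Y σ
      + (scalarCurvature R b e' * g Y ρ + (Fintype.card ι - 2) * ricci R b e' Y ρ) := by
  have hA := hdual.sum_mul_apply hsymm hσ (ricci R b e' Y)
  have hB := hdual.sum_mul_apply hsymm hρ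
    (scalarCurvature R b e' • g Y + (Fintype.card ι - 2 : ℝ) • ricci R b e' Y)
  simp only [LinearMap.add_apply, LinearMap.smul_apply, smul_eq_mul] at hB
  simp only [h.sum_contract hdual hsymm, sum_add_distrib, hA, hB]

lemma dual_eq_smul (h : IsHyperGeneralizedRecurrent D R g b e' A B)
    (hdual : IsDualBasis g b e') (hsymm : ∀ X Y, g X Y = g Y X)
    (hr : scalarCurvature R b e' ≠ 0) (hDr : ∀ U, ∑ i, ∑ j, D U (b i) (b j) (e' i) (e' j) = 0)
    (hσ : ∀ X, g σ X = A X) (hρ : ∀ X, g ρ X = B X) :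
    σ = (-(2 * ((Fintype.card ι : ℝ) - 1))) • ρ := by
  have hAB (U : V) : A U = -(2 * (Fintype.card ι - 1)) * B U := by
    have := h.sum_sum_contract hdual hsymm U
    rw [hDr, eq_comm, mul_eq_zero] at this
    linarith [this.resolve_left hr]
  exact eq_of_sub_eq_zero <| hdual.separatingLeft _ fun Y => by simp [hσ, hρ, hAB]

lemma ricci_dual_add_eq_zero (h : IsHyperGeneralizedRecurrent D R g b e' A B)
    (hdual : IsDualBasis g b e') (hsymm : ∀ X Y, g X Y = g Y X)
    (hR_anti : ∀ X Y Z W, R X Y Z W = -R Y X Z W) (hR_pair : ∀ X Y Z W, R X Y Z W = R Z W X Y)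
    (hBianchi : ∀ X Y Z W U, D X Y Z W U + D Y Z X W U + D Z X Y W U = 0)
    (hDr : ∀ U, ∑ i, ∑ j, D U (b i) (b j) (e' i) (e' j) = 0)
    (hσ : ∀ X, g σ X = A X) (hρ : ∀ X, g ρ X = B X) (Y : V) :
    ricci R b e' Y σ
      + (scalarCurvature R b e' * g Y ρ + (Fintype.card ι - 2) * ricci R b e' Y ρ) = 0 := by
  have := two_mul_sum_sum_bianchi b e' hBianchi (h.anti_left hR_anti)
    (h.anti_right hR_anti hR_pair) Y
  rw [hDr, h.sum_sum_contract_left hdual hsymm hσ hρ] at this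
  linarith

lemma hasEigenvector_dual (h : IsHyperGeneralizedRecurrent D R g b e' A B)
    (hdual : IsDualBasis g b e') (hsymm : ∀ X Y, g X Y = g Y X)
    (hR_anti : ∀ X Y Z W, R X Y Z W = -R Y X Z W) (hR_pair : ∀ X Y Z W, R X Y Z W = R Z W X Y)
    (hBianchi : ∀ X Y Z W U, D X Y Z W U + D Y Z X W U + D Z X Y W U = 0)
    (hr : scalarCurvature R b e' ≠ 0) (hDr : ∀ U, ∑ i, ∑ j, D U (b i) (b j) (e' i) (e' j) = 0)
    (hB : B ≠ 0) (hσ : ∀ X, g σ X = A X) (hρ : ∀ X, g ρ X = B X)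
    {Ric₀ : Module.End ℝ V} (hRic₀ : ∀ X Y, g (Ric₀ X) Y = ricci R b e' X Y) :
    Ric₀.HasEigenvector (scalarCurvature R b e' / Fintype.card ι) ρ := by
  have hcard : (Fintype.card ι : ℝ) ≠ 0 := by
    intro hcard
    have : IsEmpty ι := Fintype.card_eq_zero_iff.mp (by exact_mod_cast hcard)
    simp [scalarCurvature] at hr
  have hρ_ne : ρ ≠ 0 := by
    rintro rfl
    exact hB (LinearMap.ext fun X => by simp [← hρ])
  refine ⟨Module.End.mem_eigenspace_iff.mpr ?_, hρ_ne⟩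
  refine eq_of_sub_eq_zero <| hdual.separatingLeft _ fun Y => ?_
  have := h.ricci_dual_add_eq_zero hdual hsymm hR_anti hR_pair hBianchi hDr hσ hρ Y
  rw [h.dual_eq_smul hdual hsymm hr hDr hσ hρ, map_smul, smul_eq_mul] at this
  simp only [map_sub, map_smul, LinearMap.sub_apply, LinearMap.smul_apply, smul_eq_mul, hRic₀,
    ricci_symm hdual hsymm hR_pair ρ Y, hsymm ρ Y]
  field_simp
  linarith

end IsHyperGeneralizedRecurrent

end HyperGeneralizedRecurrent

theorem hgr_eigenvalue_of_ricci_operator_general {V : Type*} [AddCommGroup V] [Module ℝ V]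
    (n : ℕ)
    (b : Module.Basis (Fin n) ℝ V) (e' : Fin n → V)
    (g : V →ₗ[ℝ] V →ₗ[ℝ] ℝ)
    (hg_symm : ∀ X Y, g X Y = g Y X)
    (hdual : ∀ i j, g (b i) (e' j) = if i = j then (1 : ℝ) else 0)
    (R : V →ₗ[ℝ] V →ₗ[ℝ] V →ₗ[ℝ] V →ₗ[ℝ] ℝ)
    (hR_anti : ∀ X Y Z W, R X Y Z W = - R Y X Z W)
    (hR_pair : ∀ X Y Z W, R X Y Z W = R Z W X Y)
    (Ric : V → V → ℝ)
    (hRic : ∀ X Z, Ric X Z = ∑ i, R X (b i) Z (e' i))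
    (r : ℝ) (hr : r = ∑ i, Ric (b i) (e' i))
    (Ric₀ : V →ₗ[ℝ] V)
    (hRic₀ : ∀ X Y, g (Ric₀ X) Y = Ric X Y)
    (D : V →ₗ[ℝ] V →ₗ[ℝ] V →ₗ[ℝ] V →ₗ[ℝ] V →ₗ[ℝ] ℝ)
    (hBianchi : ∀ X Y Z W U, D X Y Z W U + D Y Z X W U + D Z X Y W U = 0)
    (A B : V →ₗ[ℝ] ℝ) (hB : B ≠ 0)
    (hHGR : ∀ U X Y Z W,
      D U X Y Z W = A U * R X Y Z W + B U * KN (fun a c => g a c) Ric X Y Z W)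
    (DRic : V → V → V → ℝ)
    (hDRicDef : ∀ U X Z, DRic U X Z = ∑ i, D U X (b i) Z (e' i))
    (Dr : V → ℝ)
    (hDrDef : ∀ U, Dr U = ∑ i, DRic U (b i) (e' i))
    (hr_ne : r ≠ 0) (hr_const : ∀ U, Dr U = 0)
    (σ ρ : V)
    (hσ : ∀ X, g σ X = A X) (hρ : ∀ X, g ρ X = B X)
    :
    Module.End.HasEigenvalue (Ric₀ : Module.End ℝ V) (r / (n : ℝ)) ∧
    Ric₀ σ = (r / (n : ℝ)) • σ ∧ Ric₀ ρ = (r / (n : ℝ)) • ρ := by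
  obtain rfl : Ric = fun X Z => ricci R b e' X Z := funext₂ hRic
  obtain rfl : r = scalarCurvature R b e' := hr
  have hgr : IsHyperGeneralizedRecurrent D R g b e' A B := hHGR
  have hDr (U : V) : ∑ i, ∑ j, D U (b i) (b j) (e' i) (e' j) = 0 := by
    simpa [hDrDef, hDRicDef] using hr_const U
  have hρ_eig := hgr.hasEigenvector_dual hdual hg_symm hR_anti hR_pair hBianchi hr_ne hDr hB hσ hρ
    hRic₀
  have hσρ := hgr.dual_eq_smul hdual hg_symm hr_ne hDr hσ hρ
  rw [Fintype.card_fin] at hρ_eig hσρ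
  refine ⟨Module.End.hasEigenvalue_of_hasEigenvector hρ_eig, ?_, hρ_eig.apply_eq_smul⟩
  rw [hσρ, map_smul, hρ_eig.apply_eq_smul, smul_comm]

theorem hgr_eigenvalue_of_ricci_operator {V : Type*} [AddCommGroup V] [Module ℝ V]
    (n : ℕ) (hn : 3 ≤ n)
    (b : Module.Basis (Fin n) ℝ V) (e' : Fin n → V)
    (g : V →ₗ[ℝ] V →ₗ[ℝ] ℝ)
    (hg_symm : ∀ X Y, g X Y = g Y X)
    (hg_nd : ∀ X, (∀ Y, g X Y = 0) → X = 0)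
    (hdual : ∀ i j, g (b i) (e' j) = if i = j then (1 : ℝ) else 0)
    (R : V →ₗ[ℝ] V →ₗ[ℝ] V →ₗ[ℝ] V →ₗ[ℝ] ℝ)
    (hR_ne : R ≠ 0)
    (hR_anti : ∀ X Y Z W, R X Y Z W = - R Y X Z W)
    (hR_pair : ∀ X Y Z W, R X Y Z W = R Z W X Y)
    (Ric : V → V → ℝ)
    (hRic : ∀ X Z, Ric X Z = ∑ i, R X (b i) Z (e' i))
    (r : ℝ) (hr : r = ∑ i, Ric (b i) (e' i))
    (Ric₀ : V →ₗ[ℝ] V)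
    (hRic₀ : ∀ X Y, g (Ric₀ X) Y = Ric X Y)
    (D : V →ₗ[ℝ] V →ₗ[ℝ] V →ₗ[ℝ] V →ₗ[ℝ] V →ₗ[ℝ] ℝ)
    (hBianchi : ∀ X Y Z W U, D X Y Z W U + D Y Z X W U + D Z X Y W U = 0)
    (A B : V →ₗ[ℝ] ℝ) (hA : A ≠ 0) (hB : B ≠ 0)
    (hHGR : ∀ U X Y Z W,
      D U X Y Z W = A U * R X Y Z W + B U * KN (fun a c => g a c) Ric X Y Z W)
    (DRic : V → V → V → ℝ)
    (hDRicDef : ∀ U X Z, DRic U X Z = ∑ i, D U X (b i) Z (e' i))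
    (Dr : V → ℝ)
    (hDrDef : ∀ U, Dr U = ∑ i, DRic U (b i) (e' i))
    (hr_ne : r ≠ 0) (hr_const : ∀ U, Dr U = 0)
    (σ ρ : V)
    (hσ : ∀ X, g σ X = A X) (hρ : ∀ X, g ρ X = B X)
    :
    Module.End.HasEigenvalue (Ric₀ : Module.End ℝ V) (r / (n : ℝ)) ∧
    Ric₀ σ = (r / (n : ℝ)) • σ ∧ Ric₀ ρ = (r / (n : ℝ)) • ρ :=
  hgr_eigenvalue_of_ricci_operator_general n b e' g hg_symm hdual R hR_anti hR_pair Ric hRic r hr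
    Ric₀ hRic₀ D hBianchi A B hB hHGR DRic hDRicDef Dr hDrDef hr_ne hr_const σ ρ hσ hρ
end

section
/- Walker-type lemma used in the proof of Theorem 2.4(b): Let V be a real vector space, H : V×V×V×V → ℝ a nonzero quadrilinear form satisfying the pair symmetry H(X,Y,Z,W) = H(Z,W,X,Y), and F : V×V → ℝ an antisymmetric bilinear form such that F(U,V)·H(W,X,Y,Z) + F(W,X)·H(Y,Z,U,V) + F(Y,Z)·H(U,V,W,X) = 0 for all U, V, W, X, Y, Z ∈ V. Then F = 0. -/
open scoped BigOperators

theorem walker_type_lemma {V : Type*} [AddCommGroup V] [Module ℝ V]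
    (H : V →ₗ[ℝ] V →ₗ[ℝ] V →ₗ[ℝ] V →ₗ[ℝ] ℝ)
    (hH_ne : H ≠ 0)
    (hH_pair : ∀ X Y Z W, H X Y Z W = H Z W X Y)
    (F : V →ₗ[ℝ] V →ₗ[ℝ] ℝ)
    (hF_anti : ∀ U W, F U W = - F W U)
    (hmain : ∀ U V' W X Y Z,
      F U V' * H W X Y Z + F W X * H Y Z U V' + F Y Z * H U V' W X = 0)
    :
    F = 0 := by
  by_contra hF
  apply hH_ne
  -- extract a pair where F is nonzero
  have ⟨U, V', hUV⟩ : ∃ U V', F U V' ≠ 0 := by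
    by_contra h
    push_neg at h
    exact hF (by ext U V'; simpa using h U V')
  -- H U V' U V' = 0
  have h1 : H U V' U V' = 0 := by
    have := hmain U V' U V' U V'
    rw [hH_pair U V' U V'] at this
    have h3 : F U V' * H U V' U V' = 0 := by linarith
    exact (mul_eq_zero.mp h3).resolve_left hUV
  -- H U V' W X = 0 for all W X
  have h2 : ∀ W X, H U V' W X = 0 := by
    intro W X
    have := hmain W X U V' U V'
    rw [h1, hH_pair W X U V'] at this
    have h3 : F U V' * H U V' W X = 0 := by linarith
    exact (mul_eq_zero.mp h3).resolve_left hUV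
  ext W X Y Z
  have := hmain U V' W X Y Z
  rw [hH_pair Y Z U V', h2 Y Z, h2 W X] at this
  have h3 : F U V' * H W X Y Z = 0 := by linarith
  simpa using (mul_eq_zero.mp h3).resolve_left hUV
end

section
/- Under hyper-generalized recurrence with recurrence 1-forms A and B, if r = 0 and B(Ric₀ X) = 0 for all X ∈ V, then A(R(X,Y)ρ) = 0 for all X, Y ∈ V, where ρ is the g-dual of B and R(X,Y)ρ is determined by g(R(X,Y)ρ, W) = R(X,Y,ρ,W). (Theorem 2.5(b).) -/
open scoped BigOperators

/-!
Put `ρ` in the third slot of the second Bianchi identity. Since `g(·, ρ) = B` and `Ric(·, ρ) = 0`,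
the `B`-terms of the recurrence cancel in the cyclic sum, leaving
`A(U) R(X,Y,ρ,W) + A(X) R(Y,U,ρ,W) + A(Y) R(U,X,ρ,W) = 0`. Contracting `U` against `W` over the
dual bases, the last two terms become `± A(·) Ric(·, ρ) = 0` and the first one becomes `A(R(X,Y)ρ)`.
-/

open Finset

section DualBasis

variable {K V ι : Type*} [CommSemiring K] [AddCommMonoid V] [Module K V] [Fintype ι]
  [DecidableEq ι] {b : Module.Basis ι K V} {e' : ι → V} {g : V →ₗ[K] V →ₗ[K] K}

theorem apply_dual_eq_basis_repr (hdual : ∀ i j, g (b i) (e' j) = if i = j then 1 else 0)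
    (w : V) (j : ι) : g w (e' j) = b.repr w j := by
  calc g w (e' j) = g (∑ i, b.repr w i • b i) (e' j) := by rw [b.sum_repr]
    _ = b.repr w j := by
        simp only [map_sum, map_smul, LinearMap.sum_apply, LinearMap.smul_apply, hdual,
          smul_eq_mul, mul_ite, mul_one, mul_zero, sum_ite_eq', mem_univ, if_true]

theorem sum_apply_dual_mul_apply_basis (hdual : ∀ i j, g (b i) (e' j) = if i = j then 1 else 0)
    (f : V →ₗ[K] K) (w : V) : ∑ i, g w (e' i) * f (b i) = f w := by
  calc ∑ i, g w (e' i) * f (b i) = f (∑ i, b.repr w i • b i) := by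
        simp only [apply_dual_eq_basis_repr hdual, map_sum, map_smul, smul_eq_mul]
    _ = f w := by rw [b.sum_repr]

end DualBasis

theorem cyclic_sum_mul_KN_eq_zero {V : Type*} {g Ric : V → V → ℝ} {B : V → ℝ} {ρ : V}
    (hgρ : ∀ Z, g Z ρ = B Z) (hRicρ : ∀ Z, Ric Z ρ = 0) (U X Y W : V) :
    B U * KN g Ric X Y ρ W + B X * KN g Ric Y U ρ W + B Y * KN g Ric U X ρ W = 0 := by
  simp only [KN, hgρ, hRicρ]
  ring

section HyperGeneralizedRecurrence

variable {V : Type*} [AddCommGroup V] [Module ℝ V] {g : V →ₗ[ℝ] V →ₗ[ℝ] ℝ}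
  {R : V →ₗ[ℝ] V →ₗ[ℝ] V →ₗ[ℝ] V →ₗ[ℝ] ℝ} {Ric : V → V → ℝ}
  {D : V →ₗ[ℝ] V →ₗ[ℝ] V →ₗ[ℝ] V →ₗ[ℝ] V →ₗ[ℝ] ℝ} {A B : V →ₗ[ℝ] ℝ} {ρ : V}

theorem hgr_cyclic_sum_curv_eq_zero
    (hBianchi : ∀ X Y Z W U, D X Y Z W U + D Y Z X W U + D Z X Y W U = 0)
    (hHGR : ∀ U X Y Z W,
      D U X Y Z W = A U * R X Y Z W + B U * KN (fun a c => g a c) Ric X Y Z W)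
    (hgρ : ∀ Z, g Z ρ = B Z) (hRicρ : ∀ Z, Ric Z ρ = 0) (U X Y W : V) :
    A U * R X Y ρ W + A X * R Y U ρ W + A Y * R U X ρ W = 0 := by
  have h := hBianchi U X Y ρ W
  rw [hHGR, hHGR, hHGR] at h
  linear_combination h - cyclic_sum_mul_KN_eq_zero (g := fun a c => g a c) hgρ hRicρ U X Y W

theorem sum_curv_basis_left_eq_neg_ric {ι : Type*} [Fintype ι] {b e' : ι → V}
    (hR_anti : ∀ X Y Z W, R X Y Z W = - R Y X Z W)
    (hRic : ∀ X Z, Ric X Z = ∑ i, R X (b i) Z (e' i)) (X Z : V) :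
    ∑ i, R (b i) X Z (e' i) = - Ric X Z := by
  simp only [hRic, ← sum_neg_distrib, ← hR_anti]

end HyperGeneralizedRecurrence

theorem hgr_zero_scalar_A_of_R_rho_general {V : Type*} [AddCommGroup V] [Module ℝ V]
    (n : ℕ)
    (b : Module.Basis (Fin n) ℝ V) (e' : Fin n → V)
    (g : V →ₗ[ℝ] V →ₗ[ℝ] ℝ)
    (hg_symm : ∀ X Y, g X Y = g Y X)
    (hdual : ∀ i j, g (b i) (e' j) = if i = j then (1 : ℝ) else 0)
    (R : V →ₗ[ℝ] V →ₗ[ℝ] V →ₗ[ℝ] V →ₗ[ℝ] ℝ)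
    (hR_anti : ∀ X Y Z W, R X Y Z W = - R Y X Z W)
    (Ric : V → V → ℝ)
    (hRic : ∀ X Z, Ric X Z = ∑ i, R X (b i) Z (e' i))
    (Ric₀ : V →ₗ[ℝ] V)
    (hRic₀ : ∀ X Y, g (Ric₀ X) Y = Ric X Y)
    (D : V →ₗ[ℝ] V →ₗ[ℝ] V →ₗ[ℝ] V →ₗ[ℝ] V →ₗ[ℝ] ℝ)
    (hBianchi : ∀ X Y Z W U, D X Y Z W U + D Y Z X W U + D Z X Y W U = 0)
    (A B : V →ₗ[ℝ] ℝ)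
    (hHGR : ∀ U X Y Z W,
      D U X Y Z W = A U * R X Y Z W + B U * KN (fun a c => g a c) Ric X Y Z W)
    (hBRic : ∀ X, B (Ric₀ X) = 0)
    (ρ : V) (hρ : ∀ X, g ρ X = B X)
    (Rend : V → V → V → V)
    (hRend : ∀ X Y Z W, g (Rend X Y Z) W = R X Y Z W)
    :
    ∀ X Y, A (Rend X Y ρ) = 0 := by
  intro X Y
  have hgρ : ∀ Z, g Z ρ = B Z := fun Z => by rw [hg_symm, hρ]
  have hRicρ : ∀ Z, Ric Z ρ = 0 := fun Z => by rw [← hRic₀, hg_symm, hρ, hBRic]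
  have hcyc := hgr_cyclic_sum_curv_eq_zero hBianchi hHGR hgρ hRicρ
  calc A (Rend X Y ρ) = ∑ i, g (Rend X Y ρ) (e' i) * A (b i) :=
        (sum_apply_dual_mul_apply_basis hdual A _).symm
    _ = ∑ i, -(A X * R Y (b i) ρ (e' i) + A Y * R (b i) X ρ (e' i)) := by
        refine sum_congr rfl fun i _ => ?_
        linear_combination hRend X Y ρ (e' i) * A (b i) + hcyc (b i) X Y (e' i)
    _ = A Y * Ric X ρ - A X * Ric Y ρ := by
        rw [sum_neg_distrib, sum_add_distrib, ← mul_sum, ← mul_sum, ← hRic,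
          sum_curv_basis_left_eq_neg_ric hR_anti hRic]
        ring
    _ = 0 := by rw [hRicρ, hRicρ, mul_zero, mul_zero, sub_zero]

theorem hgr_zero_scalar_A_of_R_rho {V : Type*} [AddCommGroup V] [Module ℝ V]
    (n : ℕ) (hn : 3 ≤ n)
    (b : Module.Basis (Fin n) ℝ V) (e' : Fin n → V)
    (g : V →ₗ[ℝ] V →ₗ[ℝ] ℝ)
    (hg_symm : ∀ X Y, g X Y = g Y X)
    (hg_nd : ∀ X, (∀ Y, g X Y = 0) → X = 0)
    (hdual : ∀ i j, g (b i) (e' j) = if i = j then (1 : ℝ) else 0)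
    (R : V →ₗ[ℝ] V →ₗ[ℝ] V →ₗ[ℝ] V →ₗ[ℝ] ℝ)
    (hR_ne : R ≠ 0)
    (hR_anti : ∀ X Y Z W, R X Y Z W = - R Y X Z W)
    (hR_pair : ∀ X Y Z W, R X Y Z W = R Z W X Y)
    (Ric : V → V → ℝ)
    (hRic : ∀ X Z, Ric X Z = ∑ i, R X (b i) Z (e' i))
    (r : ℝ) (hr : r = ∑ i, Ric (b i) (e' i))
    (Ric₀ : V →ₗ[ℝ] V)
    (hRic₀ : ∀ X Y, g (Ric₀ X) Y = Ric X Y)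
    (D : V →ₗ[ℝ] V →ₗ[ℝ] V →ₗ[ℝ] V →ₗ[ℝ] V →ₗ[ℝ] ℝ)
    (hBianchi : ∀ X Y Z W U, D X Y Z W U + D Y Z X W U + D Z X Y W U = 0)
    (A B : V →ₗ[ℝ] ℝ) (hA : A ≠ 0) (hB : B ≠ 0)
    (hHGR : ∀ U X Y Z W,
      D U X Y Z W = A U * R X Y Z W + B U * KN (fun a c => g a c) Ric X Y Z W)
    (hr0 : r = 0)
    (hBRic : ∀ X, B (Ric₀ X) = 0)
    (ρ : V) (hρ : ∀ X, g ρ X = B X)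
    (Rend : V → V → V → V)
    (hRend : ∀ X Y Z W, g (Rend X Y Z) W = R X Y Z W)
    :
    ∀ X Y, A (Rend X Y ρ) = 0 :=
  hgr_zero_scalar_A_of_R_rho_general n b e' g hg_symm hdual R hR_anti Ric hRic Ric₀ hRic₀ D hBianchi
    A B hHGR hBRic ρ hρ Rend hRend
end

section
/- Under hyper-generalized recurrence with recurrence 1-forms A and B, if r = 0 and B(Ric₀ X) = 0 for all X ∈ V, then the cyclic identity 𝔖_{X,Y,Z} { A(X)·B(R(Y,Z)W) } = 0 holds for all X, Y, Z, W ∈ V, where 𝔖_{X,Y,Z} denotes the cyclic sum over X, Y, Z and B(R(Y,Z)W) = R(Y,Z,W,ρ) with ρ the g-dual of B. (Theorem 2.5(c).) -/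
open scoped BigOperators

/-! Evaluate the second Bianchi identity for `∇R = A ⊗ R + B ⊗ (g ∧ Ric)` with `ρ` in the
last slot. Since `Ric(T, ρ) = g(Ric₀ T, ρ) = B(Ric₀ T) = 0`, the Kulkarni–Nomizu term reduces
to `(g ∧ Ric)(Y, Z, W, ρ) = B(Z) Ric(Y, W) - B(Y) Ric(Z, W)`, whose `B`-weighted cyclic sum
cancels identically. What remains is the cyclic sum of
`A(X) R(Y, Z, W, ρ) = A(X) B(R(Y, Z) W)`.
-/

theorem cyclic_sum_mul_KN_eq_zero_s10 {V : Type*} (h k : V → V → ℝ) (c : V → ℝ) (ρ : V)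
    (hh : ∀ T, h T ρ = c T) (hk : ∀ T, k T ρ = 0) (X Y Z W : V) :
    c X * KN h k Y Z W ρ + c Y * KN h k Z X W ρ + c Z * KN h k X Y W ρ = 0 := by
  simp only [KN, hh, hk]
  ring

theorem hgr_zero_scalar_cyclic_AB_identity_general {V : Type*} [AddCommGroup V] [Module ℝ V]
    (g : V →ₗ[ℝ] V →ₗ[ℝ] ℝ)
    (hg_symm : ∀ X Y, g X Y = g Y X)
    (R : V →ₗ[ℝ] V →ₗ[ℝ] V →ₗ[ℝ] V →ₗ[ℝ] ℝ)
    (Ric : V → V → ℝ)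
    (Ric₀ : V →ₗ[ℝ] V)
    (hRic₀ : ∀ X Y, g (Ric₀ X) Y = Ric X Y)
    (D : V →ₗ[ℝ] V →ₗ[ℝ] V →ₗ[ℝ] V →ₗ[ℝ] V →ₗ[ℝ] ℝ)
    (hBianchi : ∀ X Y Z W U, D X Y Z W U + D Y Z X W U + D Z X Y W U = 0)
    (A B : V →ₗ[ℝ] ℝ)
    (hHGR : ∀ U X Y Z W,
      D U X Y Z W = A U * R X Y Z W + B U * KN (fun a c => g a c) Ric X Y Z W)
    (hBRic : ∀ X, B (Ric₀ X) = 0)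
    (ρ : V) (hρ : ∀ X, g ρ X = B X)
    (Rend : V → V → V → V)
    (hRend : ∀ X Y Z W, g (Rend X Y Z) W = R X Y Z W)
    :
    ∀ X Y Z W,
      A X * B (Rend Y Z W) + A Y * B (Rend Z X W) + A Z * B (Rend X Y W) = 0 := by
  intro X Y Z W
  have hgρ : ∀ T, g T ρ = B T := fun T => by rw [hg_symm, hρ]
  have hRicρ : ∀ T, Ric T ρ = 0 := fun T => by rw [← hRic₀, hgρ, hBRic]
  have hBRend : ∀ T₁ T₂ T₃, B (Rend T₁ T₂ T₃) = R T₁ T₂ T₃ ρ := fun T₁ T₂ T₃ => by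
    rw [← hgρ, hRend]
  have hcyclic := hBianchi X Y Z W ρ
  rw [hHGR, hHGR, hHGR] at hcyclic
  rw [hBRend, hBRend, hBRend]
  linear_combination
    hcyclic - cyclic_sum_mul_KN_eq_zero_s10 (fun a c => g a c) Ric B ρ hgρ hRicρ X Y Z W

theorem hgr_zero_scalar_cyclic_AB_identity {V : Type*} [AddCommGroup V] [Module ℝ V]
    (n : ℕ) (hn : 3 ≤ n)
    (b : Module.Basis (Fin n) ℝ V) (e' : Fin n → V)
    (g : V →ₗ[ℝ] V →ₗ[ℝ] ℝ)
    (hg_symm : ∀ X Y, g X Y = g Y X)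
    (hg_nd : ∀ X, (∀ Y, g X Y = 0) → X = 0)
    (hdual : ∀ i j, g (b i) (e' j) = if i = j then (1 : ℝ) else 0)
    (R : V →ₗ[ℝ] V →ₗ[ℝ] V →ₗ[ℝ] V →ₗ[ℝ] ℝ)
    (hR_ne : R ≠ 0)
    (hR_anti : ∀ X Y Z W, R X Y Z W = - R Y X Z W)
    (hR_pair : ∀ X Y Z W, R X Y Z W = R Z W X Y)
    (Ric : V → V → ℝ)
    (hRic : ∀ X Z, Ric X Z = ∑ i, R X (b i) Z (e' i))
    (r : ℝ) (hr : r = ∑ i, Ric (b i) (e' i))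
    (Ric₀ : V →ₗ[ℝ] V)
    (hRic₀ : ∀ X Y, g (Ric₀ X) Y = Ric X Y)
    (D : V →ₗ[ℝ] V →ₗ[ℝ] V →ₗ[ℝ] V →ₗ[ℝ] V →ₗ[ℝ] ℝ)
    (hBianchi : ∀ X Y Z W U, D X Y Z W U + D Y Z X W U + D Z X Y W U = 0)
    (A B : V →ₗ[ℝ] ℝ) (hA : A ≠ 0) (hB : B ≠ 0)
    (hHGR : ∀ U X Y Z W,
      D U X Y Z W = A U * R X Y Z W + B U * KN (fun a c => g a c) Ric X Y Z W)
    (hr0 : r = 0)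
    (hBRic : ∀ X, B (Ric₀ X) = 0)
    (ρ : V) (hρ : ∀ X, g ρ X = B X)
    (Rend : V → V → V → V)
    (hRend : ∀ X Y Z W, g (Rend X Y Z) W = R X Y Z W)
    :
    ∀ X Y Z W,
      A X * B (Rend Y Z W) + A Y * B (Rend Z X W) + A Z * B (Rend X Y W) = 0 :=
  hgr_zero_scalar_cyclic_AB_identity_general g hg_symm R Ric Ric₀ hRic₀ D hBianchi A B hHGR hBRic ρ
    hρ Rend hRend
end

section
/- Assume generalized conharmonic recurrence with recurrence 1-forms A and B, i.e. ∇_U ℂ = A(U)·ℂ + B(U)·G for all U ∈ V. If in addition ∇_U Ric = −((n−2)/2)·B(U)·g for all U, then the space is hyper-generalized recurrent: ∇_U R = A(U)·R + D(U)·(g∧Ric) for all U, where D := −(1/(n−2))·A is a nonzero 1-form. (Theorem 3.4(a).) -/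
/-! Since `g ∧ (c g) = 2c G`, the hypothesis on `∇Ric` turns the Ricci part
`(1/(n-2)) g ∧ ∇_U Ric` of `∇_U ℂ` into `-B(U) G`, which cancels the `B(U) G` term of the
recurrence; what remains is `∇_U R = A(U) R - (A(U)/(n-2)) g ∧ Ric`. -/

open scoped BigOperators

section KulkarniNomizu

variable {V : Type*}

theorem KN_of_eq_const_mul {g k : V → V → ℝ} {c : ℝ} (hk : ∀ X Z, k X Z = c * g X Z)
    (X Y Z W : V) : KN g k X Y Z W = 2 * c * Gten g X Y Z W := by
  simp only [KN, Gten, hk]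
  ring

theorem hyperGeneralizedRecurrent_of_conharmonicRecurrent {g Ric DRic : V → V → ℝ}
    {DR R : V → V → V → V → ℝ} {m a β : ℝ} (hm : m ≠ 0)
    (hC : ∀ X Y Z W, DR X Y Z W - (1 / m) * KN g DRic X Y Z W
      = a * (R X Y Z W - (1 / m) * KN g Ric X Y Z W) + β * Gten g X Y Z W)
    (hDRic : ∀ X Z, DRic X Z = -(m / 2) * β * g X Z) (X Y Z W : V) :
    DR X Y Z W = a * R X Y Z W + (-(1 / m) * a) * KN g Ric X Y Z W := by
  have hKN : KN g DRic X Y Z W = -(m * β) * Gten g X Y Z W := by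
    rw [KN_of_eq_const_mul hDRic]
    ring
  have h := hC X Y Z W
  rw [hKN] at h
  field_simp at h ⊢
  linear_combination h

end KulkarniNomizu

theorem gcr_to_hyper_generalized_recurrent_general {V : Type*} [AddCommGroup V] [Module ℝ V]
    (n : ℕ) (hn : 3 ≤ n)
    (g : V →ₗ[ℝ] V →ₗ[ℝ] ℝ)
    (R : V →ₗ[ℝ] V →ₗ[ℝ] V →ₗ[ℝ] V →ₗ[ℝ] ℝ)
    (Ric : V → V → ℝ)
    (D : V →ₗ[ℝ] V →ₗ[ℝ] V →ₗ[ℝ] V →ₗ[ℝ] V →ₗ[ℝ] ℝ)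
    (DRic : V → V → V → ℝ)
    (A B : V →ₗ[ℝ] ℝ) (hA : A ≠ 0)
    (hGCR : ∀ U X Y Z W,
      D U X Y Z W - (1 / ((n : ℝ) - 2)) * KN (fun a c => g a c) (DRic U) X Y Z W
        = A U * (R X Y Z W - (1 / ((n : ℝ) - 2)) * KN (fun a c => g a c) Ric X Y Z W)
          + B U * Gten (fun a c => g a c) X Y Z W)
    (hDRic : ∀ U X Z, DRic U X Z = -(((n : ℝ) - 2) / 2) * B U * g X Z)
    :
    (-(1 / ((n : ℝ) - 2))) • A ≠ (0 : V →ₗ[ℝ] ℝ) ∧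
    ∀ U X Y Z W, D U X Y Z W
      = A U * R X Y Z W
        + ((-(1 / ((n : ℝ) - 2))) • A) U * KN (fun a c => g a c) Ric X Y Z W := by
  have hn2 : (n : ℝ) - 2 ≠ 0 := by
    have : (3 : ℝ) ≤ n := by exact_mod_cast hn
    linarith
  refine ⟨smul_ne_zero (by simpa using hn2) hA, fun U => ?_⟩
  simpa only [LinearMap.smul_apply, smul_eq_mul] using
    hyperGeneralizedRecurrent_of_conharmonicRecurrent (DR := fun X Y Z W => D U X Y Z W)
      (R := fun X Y Z W => R X Y Z W) hn2 (hGCR U) (hDRic U)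

theorem gcr_to_hyper_generalized_recurrent {V : Type*} [AddCommGroup V] [Module ℝ V]
    (n : ℕ) (hn : 3 ≤ n)
    (b : Module.Basis (Fin n) ℝ V) (e' : Fin n → V)
    (g : V →ₗ[ℝ] V →ₗ[ℝ] ℝ)
    (hg_symm : ∀ X Y, g X Y = g Y X)
    (hg_nd : ∀ X, (∀ Y, g X Y = 0) → X = 0)
    (hdual : ∀ i j, g (b i) (e' j) = if i = j then (1 : ℝ) else 0)
    (R : V →ₗ[ℝ] V →ₗ[ℝ] V →ₗ[ℝ] V →ₗ[ℝ] ℝ)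
    (hR_ne : R ≠ 0)
    (hR_anti : ∀ X Y Z W, R X Y Z W = - R Y X Z W)
    (hR_pair : ∀ X Y Z W, R X Y Z W = R Z W X Y)
    (Ric : V → V → ℝ)
    (hRic : ∀ X Z, Ric X Z = ∑ i, R X (b i) Z (e' i))
    (r : ℝ) (hr : r = ∑ i, Ric (b i) (e' i))
    (D : V →ₗ[ℝ] V →ₗ[ℝ] V →ₗ[ℝ] V →ₗ[ℝ] V →ₗ[ℝ] ℝ)
    (DRic : V → V → V → ℝ)
    (hDRic_symm : ∀ U X Z, DRic U X Z = DRic U Z X)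
    (A B : V →ₗ[ℝ] ℝ) (hA : A ≠ 0) (hB : B ≠ 0)
    (hGCR : ∀ U X Y Z W,
      D U X Y Z W - (1 / ((n : ℝ) - 2)) * KN (fun a c => g a c) (DRic U) X Y Z W
        = A U * (R X Y Z W - (1 / ((n : ℝ) - 2)) * KN (fun a c => g a c) Ric X Y Z W)
          + B U * Gten (fun a c => g a c) X Y Z W)
    (hDRic : ∀ U X Z, DRic U X Z = -(((n : ℝ) - 2) / 2) * B U * g X Z)
    :
    (-(1 / ((n : ℝ) - 2))) • A ≠ (0 : V →ₗ[ℝ] ℝ) ∧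
    ∀ U X Y Z W, D U X Y Z W
      = A U * R X Y Z W
        + ((-(1 / ((n : ℝ) - 2))) • A) U * KN (fun a c => g a c) Ric X Y Z W :=
  gcr_to_hyper_generalized_recurrent_general n hn g R Ric D DRic A B hA hGCR hDRic
end

section
/- Assume generalized conharmonic recurrence with recurrence 1-forms A and B, i.e. ∇_U ℂ = A(U)·ℂ + B(U)·G for all U ∈ V. If in addition ∇_U Ric = A(U)·Ric − ((n−2)/2)·B(U)·g for all U, then the space is recurrent: ∇_U R = A(U)·R for all U ∈ V. (Theorem 3.4(c).) -/
open scoped BigOperators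

/-!
Substituting the prescribed `∇_U Ric` into `g ∧ ∇_U Ric` and using `g ∧ g = 2G` turns the
Kulkarni–Nomizu term on the left of the recurrence into `A(U)·(g ∧ Ric)/(n-2) - B(U)·G`; both
the Ricci terms and the `B(U)·G` terms then cancel against the right-hand side.
-/

section KulkarniNomizu

variable {V : Type*}

theorem KN_self (h : V → V → ℝ) (X Y Z W : V) : KN h h X Y Z W = 2 * Gten h X Y Z W := by
  unfold KN Gten
  ring

theorem KN_mul_sub_mul_right (h k l : V → V → ℝ) (s t : ℝ) (X Y Z W : V) :
    KN h (fun a c => s * k a c - t * l a c) X Y Z W = s * KN h k X Y Z W - t * KN h l X Y Z W := by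
  unfold KN
  ring

end KulkarniNomizu

theorem eq_mul_of_conharmonic_recurrence {V : Type*} (g Ric DRic : V → V → ℝ)
    (R DR : V → V → V → V → ℝ) (m α β : ℝ) (hm : m ≠ 0)
    (hrec : ∀ X Y Z W, DR X Y Z W - (1 / m) * KN g DRic X Y Z W
      = α * (R X Y Z W - (1 / m) * KN g Ric X Y Z W) + β * Gten g X Y Z W)
    (hDRic : ∀ X Z, DRic X Z = α * Ric X Z - (m / 2) * β * g X Z)
    (X Y Z W : V) : DR X Y Z W = α * R X Y Z W := by
  have hKN : KN g DRic X Y Z W = α * KN g Ric X Y Z W - m * β * Gten g X Y Z W := by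
    rw [show DRic = fun a c => α * Ric a c - (m / 2 * β) * g a c from funext₂ hDRic,
      KN_mul_sub_mul_right, KN_self]
    ring
  have hcancel : 1 / m * (m * β * Gten g X Y Z W) = β * Gten g X Y Z W := by
    field_simp
  linear_combination hrec X Y Z W + (1 / m) * hKN - hcancel

theorem gcr_to_recurrent_general {V : Type*} [AddCommGroup V] [Module ℝ V]
    (n : ℕ) (hn : 3 ≤ n)
    (g : V →ₗ[ℝ] V →ₗ[ℝ] ℝ)
    (R : V →ₗ[ℝ] V →ₗ[ℝ] V →ₗ[ℝ] V →ₗ[ℝ] ℝ)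
    (Ric : V → V → ℝ)
    (D : V →ₗ[ℝ] V →ₗ[ℝ] V →ₗ[ℝ] V →ₗ[ℝ] V →ₗ[ℝ] ℝ)
    (DRic : V → V → V → ℝ)
    (A B : V →ₗ[ℝ] ℝ)
    (hGCR : ∀ U X Y Z W,
      D U X Y Z W - (1 / ((n : ℝ) - 2)) * KN (fun a c => g a c) (DRic U) X Y Z W
        = A U * (R X Y Z W - (1 / ((n : ℝ) - 2)) * KN (fun a c => g a c) Ric X Y Z W)
          + B U * Gten (fun a c => g a c) X Y Z W)
    (hDRic : ∀ U X Z, DRic U X Z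
      = A U * Ric X Z - (((n : ℝ) - 2) / 2) * B U * g X Z)
    :
    ∀ U X Y Z W, D U X Y Z W = A U * R X Y Z W := by
  have hn2 : (n : ℝ) - 2 ≠ 0 := by
    have : (3 : ℝ) ≤ n := by exact_mod_cast hn
    linarith
  intro U
  exact eq_mul_of_conharmonic_recurrence (fun a c => g a c) Ric (DRic U) (fun X Y Z W => R X Y Z W)
    (fun X Y Z W => D U X Y Z W) _ _ _ hn2 (hGCR U) (hDRic U)

theorem gcr_to_recurrent {V : Type*} [AddCommGroup V] [Module ℝ V]
    (n : ℕ) (hn : 3 ≤ n)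
    (b : Module.Basis (Fin n) ℝ V) (e' : Fin n → V)
    (g : V →ₗ[ℝ] V →ₗ[ℝ] ℝ)
    (hg_symm : ∀ X Y, g X Y = g Y X)
    (hg_nd : ∀ X, (∀ Y, g X Y = 0) → X = 0)
    (hdual : ∀ i j, g (b i) (e' j) = if i = j then (1 : ℝ) else 0)
    (R : V →ₗ[ℝ] V →ₗ[ℝ] V →ₗ[ℝ] V →ₗ[ℝ] ℝ)
    (hR_ne : R ≠ 0)
    (hR_anti : ∀ X Y Z W, R X Y Z W = - R Y X Z W)
    (hR_pair : ∀ X Y Z W, R X Y Z W = R Z W X Y)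
    (Ric : V → V → ℝ)
    (hRic : ∀ X Z, Ric X Z = ∑ i, R X (b i) Z (e' i))
    (r : ℝ) (hr : r = ∑ i, Ric (b i) (e' i))
    (D : V →ₗ[ℝ] V →ₗ[ℝ] V →ₗ[ℝ] V →ₗ[ℝ] V →ₗ[ℝ] ℝ)
    (DRic : V → V → V → ℝ)
    (hDRic_symm : ∀ U X Z, DRic U X Z = DRic U Z X)
    (A B : V →ₗ[ℝ] ℝ) (hA : A ≠ 0) (hB : B ≠ 0)
    (hGCR : ∀ U X Y Z W,
      D U X Y Z W - (1 / ((n : ℝ) - 2)) * KN (fun a c => g a c) (DRic U) X Y Z W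
        = A U * (R X Y Z W - (1 / ((n : ℝ) - 2)) * KN (fun a c => g a c) Ric X Y Z W)
          + B U * Gten (fun a c => g a c) X Y Z W)
    (hDRic : ∀ U X Z, DRic U X Z
      = A U * Ric X Z - (((n : ℝ) - 2) / 2) * B U * g X Z)
    :
    ∀ U X Y Z W, D U X Y Z W = A U * R X Y Z W :=
  gcr_to_recurrent_general n hn g R Ric D DRic A B hGCR hDRic
end
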